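/- Under the data of the Gaussian worst-case construction (y_t = √(β/n)(√(n−1) − √(t(n−t)) + √((t−1)(n−t+1)))), with Gaussian costs m_n^s := (n−s)·V(y_{s,n}) restricted from inner functions with Q_s = s·V(y_{0,s}) + (indicator s>0)·β adjustments, the equality n·V(y_{0,n}) = (n−t)·V(y_{t,n}) + t·V(y_{0,t}) + β holds for every t = 1,…,n−1. -/

import Mathlib

/-!
Splitting a segment at `t` changes its cost `(b - a) · V` by the between-group term
`A²/(t - a) + B²/(b - t) - (A + B)²/(b - a)`, where `A`, `B` are the sums of the two parts.
The data `y` telescope: `y (j + 1) = c + S j - S (j + 1)` with `c = √(β/n)√(n - 1)` and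
`S j = √(β/n)√(j(n - j))`, which vanishes at `0` and `n`. So the two parts have sums `t c - S t`
and `(n - t) c + S t`; the `c` contributions cancel in the between-group term, leaving
`(S t)² n / (t (n - t)) = β`.
-/

/-- Mean of the segment (a,b]. -/
noncomputable def segMean (y : ℕ → ℝ) (a b : ℕ) : ℝ :=
  (∑ j ∈ Finset.Ioc a b, y j) / ((b : ℝ) - a)

/-- Variance of the segment (a,b]. -/
noncomputable def segVar (y : ℕ → ℝ) (a b : ℕ) : ℝ :=
  (∑ j ∈ Finset.Ioc a b, (y j) ^ 2) / ((b : ℝ) - a) - (segMean y a b) ^ 2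

open Finset

theorem mul_segVar (y : ℕ → ℝ) (a b : ℕ) :
    ((b : ℝ) - a) * segVar y a b
      = ∑ j ∈ Ioc a b, y j ^ 2 - (∑ j ∈ Ioc a b, y j) ^ 2 / ((b : ℝ) - a) := by
  unfold segVar segMean
  by_cases h : (b : ℝ) - a = 0
  · obtain rfl : b = a := by exact_mod_cast sub_eq_zero.mp h
    simp
  · field_simp

theorem mul_segVar_eq_add_of_le {y : ℕ → ℝ} {a t b : ℕ} (hat : a ≤ t) (htb : t ≤ b) :
    ((b : ℝ) - a) * segVar y a b
      = ((b : ℝ) - t) * segVar y t b + ((t : ℝ) - a) * segVar y a t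
        + ((∑ j ∈ Ioc a t, y j) ^ 2 / ((t : ℝ) - a) + (∑ j ∈ Ioc t b, y j) ^ 2 / ((b : ℝ) - t)
          - (∑ j ∈ Ioc a b, y j) ^ 2 / ((b : ℝ) - a)) := by
  simp only [mul_segVar, ← sum_Ioc_consecutive _ hat htb]
  ring

theorem sum_Ioc_eq_of_telescoping {y S : ℕ → ℝ} {c : ℝ}
    (h : ∀ j, y (j + 1) = c + S j - S (j + 1)) {a b : ℕ} (hab : a ≤ b) :
    ∑ j ∈ Ioc a b, y j = ((b : ℝ) - a) * c + S a - S b := by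
  induction b, hab using Nat.le_induction with
  | base => simp
  | succ b hab ih =>
    rw [sum_Ioc_succ_top hab, ih, h]
    push_cast
    ring

theorem between_sq_div_eq {n t c s : ℝ} (ht : 0 < t) (htn : t < n) :
    (t * c - s) ^ 2 / t + ((n - t) * c + s) ^ 2 / (n - t) - (n * c) ^ 2 / n
      = s ^ 2 * n / (t * (n - t)) := by
  have hnt : n - t ≠ 0 := by linarith
  field_simp
  ring

theorem stmt_6_general (n : ℕ) (β : ℝ) (hβ : 0 < β) (y : ℕ → ℝ)
    (hy : ∀ t : ℕ, y t = Real.sqrt (β / n) *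
      (Real.sqrt ((n : ℝ) - 1) - Real.sqrt ((t : ℝ) * ((n : ℝ) - t))
        + Real.sqrt (((t : ℝ) - 1) * ((n : ℝ) - t + 1)))) :
    ∀ t : ℕ, 1 ≤ t → t ≤ n - 1 →
      (n : ℝ) * segVar y 0 n
        = ((n : ℝ) - t) * segVar y t n + (t : ℝ) * segVar y 0 t + β := by
  intro t ht1 htn
  have ht : (0 : ℝ) < t := by exact_mod_cast ht1
  have htn' : (t : ℝ) < n := by exact_mod_cast (show t < n by omega)
  have hnt : (0 : ℝ) < n - t := sub_pos.2 htn'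
  set c := Real.sqrt (β / n) * Real.sqrt ((n : ℝ) - 1)
  set S : ℕ → ℝ := fun j => Real.sqrt (β / n) * Real.sqrt ((j : ℝ) * ((n : ℝ) - j)) with hS
  have hstep (j : ℕ) : y (j + 1) = c + S j - S (j + 1) := by
    rw [hy, hS]
    push_cast
    rw [show ((j : ℝ) + 1 - 1) * ((n : ℝ) - (j + 1) + 1) = j * (n - j) by ring]
    ring
  have hsum {a b : ℕ} (hab : a ≤ b) := sum_Ioc_eq_of_telescoping hstep hab
  have hS0 : S 0 = 0 := by simp [hS]
  have hSn : S n = 0 := by simp [hS]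
  have hSt : S t ^ 2 = β / n * (t * (n - t)) := by
    rw [hS, mul_pow, Real.sq_sqrt (by positivity), Real.sq_sqrt (mul_pos ht hnt).le]
  have hsplit := mul_segVar_eq_add_of_le (y := y) (Nat.zero_le t) (show t ≤ n by omega)
  rw [hsum (Nat.zero_le t), hsum (show t ≤ n by omega), hsum (Nat.zero_le n), hS0, hSn] at hsplit
  simp only [Nat.cast_zero, sub_zero, add_zero] at hsplit
  have hn : (0 : ℝ) < n := ht.trans htn'
  rw [hsplit, between_sq_div_eq ht htn', hSt]
  field_simp

theorem stmt_6 (n : ℕ) (hn : 2 ≤ n) (β : ℝ) (hβ : 0 < β) (y : ℕ → ℝ)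
    (hy : ∀ t : ℕ, y t = Real.sqrt (β / n) *
      (Real.sqrt ((n : ℝ) - 1) - Real.sqrt ((t : ℝ) * ((n : ℝ) - t))
        + Real.sqrt (((t : ℝ) - 1) * ((n : ℝ) - t + 1)))) :
    ∀ t : ℕ, 1 ≤ t → t ≤ n - 1 →
      (n : ℝ) * segVar y 0 n
        = ((n : ℝ) - t) * segVar y t n + (t : ℝ) * segVar y 0 t + β :=
  stmt_6_general n β hβ y hy
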